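/- arXiv:math/0410480 — 10 statements merged into one kernel-verified Lean document; each statement's English description precedes it below -/
import Mathlib

section
/- A Mauldin-Williams graph has a unique invariant list: there exists exactly one family of nonempty compact sets (K_v)_{v∈E⁰} with K_v ⊆ T_v such that K_v = ⋃_{e : s(e)=v} φ_e(K_{r(e)}) for every vertex v. -/
open Set Metric EMetric
open scoped ENNReal NNReal

/-- A Mauldin-Williams graph has a unique invariant list. -/
theorem mauldin_williams_unique_invariant_list
    {V E X : Type} [Fintype V] [Fintype E] [MetricSpace X] [CompleteSpace X]
    (r s : E → V) (hr : Function.Surjective r) (hs : Function.Surjective s)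
    (T : V → Set X) (hTc : ∀ v, IsCompact (T v)) (hTne : ∀ v, (T v).Nonempty)
    (φ : E → X → X)
    (hmap : ∀ e, ∀ x ∈ T (r e), φ e x ∈ T (s e))
    (c' c : ℝ) (hc'0 : 0 < c') (hc'c : c' < c) (hc1 : c < 1)
    (hbilip : ∀ e, ∀ x ∈ T (r e), ∀ y ∈ T (r e),
      c' * dist x y ≤ dist (φ e x) (φ e y) ∧ dist (φ e x) (φ e y) ≤ c * dist x y) :
    ∃! Kf : V → Set X,
      (∀ v, (Kf v).Nonempty ∧ IsCompact (Kf v) ∧ Kf v ⊆ T v) ∧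
      (∀ v, Kf v = ⋃ e ∈ {e : E | s e = v}, φ e '' Kf (r e)) := by
  classical
  have hc0 : (0:ℝ) < c := hc'0.trans hc'c
  set cn : NNReal := ⟨c, hc0.le⟩ with hcn
  have hlip : ∀ e, LipschitzOnWith cn (φ e) (T (r e)) := fun e =>
    LipschitzOnWith.of_dist_le_mul (fun x hx y hy => (hbilip e x hx y hy).2)
  have hcont : ∀ e, ContinuousOn (φ e) (T (r e)) := fun e => (hlip e).continuousOn
  -- iteration
  set F : (V → Set X) → (V → Set X) :=
    fun K v => ⋃ e ∈ {e : E | s e = v}, φ e '' K (r e) with hF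
  set A : ℕ → V → Set X := fun n => F^[n] T with hA
  have hA0 : A 0 = T := rfl
  have hAsucc : ∀ n, A (n+1) = F (A n) := fun n => Function.iterate_succ_apply' F n T
  -- basic properties by induction
  have hsub : ∀ n v, A n v ⊆ T v := by
    intro n
    induction n with
    | zero => intro v; exact subset_rfl
    | succ n ih =>
      intro v
      rw [hAsucc]
      intro x hx
      simp only [hF, mem_iUnion] at hx
      obtain ⟨e, he, y, hy, rfl⟩ := hx
      exact he ▸ hmap e y (ih _ hy)
  have hcpt : ∀ n v, IsCompact (A n v) := by
    intro n
    induction n with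
    | zero => exact hTc
    | succ n ih =>
      intro v
      rw [hAsucc]
      exact (Set.toFinite _).isCompact_biUnion fun e _ =>
        (ih (r e)).image_of_continuousOn ((hcont e).mono (hsub n (r e)))
  have hne : ∀ n v, (A n v).Nonempty := by
    intro n
    induction n with
    | zero => exact hTne
    | succ n ih =>
      intro v
      obtain ⟨e, rfl⟩ := hs v
      obtain ⟨y, hy⟩ := ih (r e)
      rw [hAsucc]
      exact ⟨φ e y, mem_iUnion₂.2 ⟨e, rfl, mem_image_of_mem _ hy⟩⟩
  have hdec : ∀ n v, A (n+1) v ⊆ A n v := by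
    intro n
    induction n with
    | zero =>
      intro v x hx
      rw [hAsucc] at hx
      simp only [hF, mem_iUnion] at hx
      obtain ⟨e, he, y, hy, rfl⟩ := hx
      exact he ▸ hmap e y hy
    | succ n ih =>
      intro v x hx
      rw [hAsucc (n+1)] at hx
      simp only [hF, mem_iUnion] at hx
      obtain ⟨e, he, y, hy, rfl⟩ := hx
      rw [hAsucc n]
      simp only [hF]
      exact mem_iUnion₂.2 ⟨e, he, mem_image_of_mem _ (ih (r e) hy)⟩
  have hanti : ∀ v, Antitone (fun n => A n v) := by
    intro v
    apply antitone_nat_of_succ_le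
    intro n
    exact hdec n v
  -- the invariant family
  set K : V → Set X := fun v => ⋂ n, A n v with hK
  have hKsub : ∀ v, K v ⊆ T v := fun v => iInter_subset_of_subset 0 subset_rfl
  have hKc : ∀ v, IsCompact (K v) := fun v =>
    IsCompact.of_isClosed_subset (hTc v)
      (isClosed_iInter fun n => (hcpt n v).isClosed) (hKsub v)
  have hKne : ∀ v, (K v).Nonempty := fun v =>
    IsCompact.nonempty_iInter_of_sequence_nonempty_isCompact_isClosed _
      (fun n => hdec n v) (fun n => hne n v) (hcpt 0 v) (fun n => (hcpt n v).isClosed)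
  -- invariance
  have hinv : ∀ v, K v = ⋃ e ∈ {e : E | s e = v}, φ e '' K (r e) := by
    intro v
    apply Subset.antisymm
    · -- hard direction
      intro x hx
      have hx' : ∀ n, x ∈ A (n+1) v := fun n => mem_iInter.1 hx (n+1)
      -- choose an edge for each n
      have hch : ∀ n, ∃ e, s e = v ∧ x ∈ φ e '' A n (r e) := by
        intro n
        have := hx' n
        rw [hAsucc] at this
        simp only [hF, mem_iUnion] at this
        obtain ⟨e, he, hxe⟩ := this
        exact ⟨e, he, hxe⟩
      choose ef hef hxef using hch
      -- pigeonhole: some edge occurs infinitely often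
      obtain ⟨e0, he0⟩ := Finite.exists_infinite_fiber ef
      have hinf : (ef ⁻¹' {e0}).Infinite := Set.infinite_coe_iff.1 he0
      have hall : ∀ n, x ∈ φ e0 '' A n (r e0) := by
        intro n
        obtain ⟨m, hm, hnm⟩ := hinf.exists_gt n
        have : x ∈ φ e0 '' A m (r e0) := by
          have := hxef m
          rwa [show ef m = e0 from hm] at this
        exact image_mono (hanti (r e0) hnm.le) this
      have hse0 : s e0 = v := by
        obtain ⟨m, hm⟩ := hinf.nonempty
        rw [← show ef m = e0 from hm]; exact hef m
      -- intersect the fibers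
      set B : ℕ → Set X := fun n => {y | y ∈ A n (r e0) ∧ φ e0 y = x} with hB
      have hBc : ∀ n, IsCompact (B n) := by
        intro n
        have : B n = Subtype.val '' {y : A n (r e0) | φ e0 ↑y = x} := by
          ext z
          simp only [hB, mem_setOf_eq, Set.mem_image]
          constructor
          · rintro ⟨hz, hz2⟩; exact ⟨⟨z, hz⟩, hz2, rfl⟩
          · rintro ⟨⟨z', hz'⟩, h1, rfl⟩; exact ⟨hz', h1⟩
        rw [this]
        have : CompactSpace (A n (r e0)) := isCompact_iff_compactSpace.1 (hcpt n (r e0))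
        have hcl : IsClosed {y : A n (r e0) | φ e0 ↑y = x} :=
          IsClosed.preimage (t := {x})
            (ContinuousOn.restrict ((hcont e0).mono (hsub n (r e0)))) isClosed_singleton
        exact (hcl.isCompact).image continuous_subtype_val
      have hBne : ∀ n, (B n).Nonempty := by
        intro n
        obtain ⟨y, hy, hyx⟩ := hall n
        exact ⟨y, hy, hyx⟩
      have hBdec : ∀ n, B (n+1) ⊆ B n := fun n z hz => ⟨hdec n (r e0) hz.1, hz.2⟩
      obtain ⟨y, hy⟩ := IsCompact.nonempty_iInter_of_sequence_nonempty_isCompact_isClosed B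
        hBdec hBne (hBc 0) (fun n => (hBc n).isClosed)
      have hyK : y ∈ K (r e0) := mem_iInter.2 fun n => (mem_iInter.1 hy n).1
      have hyx : φ e0 y = x := (mem_iInter.1 hy 0).2
      exact mem_iUnion₂.2 ⟨e0, hse0, y, hyK, hyx⟩
    · -- easy direction
      intro x hx
      simp only [mem_iUnion] at hx
      obtain ⟨e, he, y, hy, rfl⟩ := hx
      apply mem_iInter.2
      intro n
      cases n with
      | zero => exact he ▸ hmap e y (hKsub _ hy)
      | succ n =>
        rw [hAsucc]
        apply mem_iUnion₂.2
        exact ⟨e, he, y, mem_iInter.1 hy n, rfl⟩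
  -- uniqueness
  have huniq : ∀ K₁ K₂ : V → Set X,
      ((∀ v, (K₁ v).Nonempty ∧ IsCompact (K₁ v) ∧ K₁ v ⊆ T v) ∧
        (∀ v, K₁ v = ⋃ e ∈ {e : E | s e = v}, φ e '' K₁ (r e))) →
      ((∀ v, (K₂ v).Nonempty ∧ IsCompact (K₂ v) ∧ K₂ v ⊆ T v) ∧
        (∀ v, K₂ v = ⋃ e ∈ {e : E | s e = v}, φ e '' K₂ (r e))) →
      K₁ = K₂ := by
    rintro K₁ K₂ ⟨h₁, hi₁⟩ ⟨h₂, hi₂⟩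
    set D : ℝ≥0∞ := Finset.univ.sup (fun v => hausdorffEdist (K₁ v) (K₂ v)) with hD
    have hDtop : D < ⊤ := by
      rw [hD, Finset.sup_lt_iff (by simp : (⊥:ℝ≥0∞) < ⊤)]
      intro v _
      exact lt_top_iff_ne_top.2 (hausdorffEdist_ne_top_of_nonempty_of_bounded
        (h₁ v).1 (h₂ v).1 ((h₁ v).2.1.isBounded) ((h₂ v).2.1.isBounded))
    have hDle : ∀ v, hausdorffEdist (K₁ v) (K₂ v) ≤ D := fun v =>
      Finset.le_sup (f := fun v => hausdorffEdist (K₁ v) (K₂ v)) (Finset.mem_univ v)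
    have key : ∀ v, hausdorffEdist (K₁ v) (K₂ v) ≤ (cn : ℝ≥0∞) * D := by
      intro v
      rw [hi₁ v, hi₂ v]
      apply hausdorffEdist_le_of_mem_edist
      · intro x hx
        simp only [mem_iUnion] at hx
        obtain ⟨e, he, y, hy, rfl⟩ := hx
        obtain ⟨y', hy', hd⟩ := (h₂ (r e)).2.1.exists_infEdist_eq_edist (h₂ (r e)).1 y
        refine ⟨φ e y', mem_iUnion₂.2 ⟨e, he, y', hy', rfl⟩, ?_⟩
        calc edist (φ e y) (φ e y') ≤ (cn : ℝ≥0∞) * edist y y' :=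
              (hlip e) ((h₁ (r e)).2.2 hy) ((h₂ (r e)).2.2 hy')
          _ = (cn : ℝ≥0∞) * infEDist y (K₂ (r e)) := by rw [hd]
          _ ≤ (cn : ℝ≥0∞) * hausdorffEdist (K₁ (r e)) (K₂ (r e)) :=
              mul_le_mul_right (infEdist_le_hausdorffEdist_of_mem hy) _
          _ ≤ (cn : ℝ≥0∞) * D := mul_le_mul_right (hDle _) _
      · intro x hx
        simp only [mem_iUnion] at hx
        obtain ⟨e, he, y, hy, rfl⟩ := hx
        obtain ⟨y', hy', hd⟩ := (h₁ (r e)).2.1.exists_infEdist_eq_edist (h₁ (r e)).1 y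
        refine ⟨φ e y', mem_iUnion₂.2 ⟨e, he, y', hy', rfl⟩, ?_⟩
        calc edist (φ e y) (φ e y') ≤ (cn : ℝ≥0∞) * edist y y' :=
              (hlip e) ((h₂ (r e)).2.2 hy) ((h₁ (r e)).2.2 hy')
          _ = (cn : ℝ≥0∞) * infEDist y (K₁ (r e)) := by rw [hd]
          _ ≤ (cn : ℝ≥0∞) * hausdorffEdist (K₂ (r e)) (K₁ (r e)) :=
              mul_le_mul_right (infEdist_le_hausdorffEdist_of_mem hy) _
          _ ≤ (cn : ℝ≥0∞) * D := by
              rw [show hausdorffEdist (K₂ (r e)) (K₁ (r e)) = hausdorffEdist (K₁ (r e)) (K₂ (r e)) from hausdorffEDist_comm]; exact mul_le_mul_right (hDle _) _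
    have hDD : D ≤ (cn : ℝ≥0∞) * D := Finset.sup_le fun v _ => key v
    have hD0 : D = 0 := by
      by_contra h
      have hcn1 : (cn : ℝ≥0∞) < 1 := by
        rw [← ENNReal.coe_one, ENNReal.coe_lt_coe]
        exact_mod_cast hc1
      have : (cn : ℝ≥0∞) * D < 1 * D :=
        (ENNReal.mul_lt_mul_iff_left h hDtop.ne).2 hcn1
      rw [one_mul] at this
      exact absurd (hDD.trans_lt this) (lt_irrefl D)
    funext v
    have : hausdorffEdist (K₁ v) (K₂ v) = 0 :=
      le_antisymm ((hDle v).trans hD0.le) zero_le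
    exact (hausdorffEdist_zero_iff_eq_of_closed
      (h₁ v).2.1.isClosed (h₂ v).2.1.isClosed).1 this
  exact ⟨K, ⟨fun v => ⟨hKne v, hKc v, hKsub v⟩, hinv⟩,
    fun K' h' => huniq K' K h' ⟨fun v => ⟨hKne v, hKc v, hKsub v⟩, hinv⟩⟩
end

section
/- For an iterated function system of contractions φ₁,…,φ_n on a complete metric space T, there exists a unique nonempty compact set K ⊆ T with K = φ₁(K) ∪ ⋯ ∪ φ_n(K). -/
open Metric EMetric Set TopologicalSpace Function

/-- Hausdorff edistance between images under a Lipschitz map. -/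
lemma hausdorffEdist_image_le {T : Type} [MetricSpace T] {c : NNReal} {f : T → T}
    (hf : LipschitzWith c f) (s t : Set T) (hs : IsCompact s) (ht : IsCompact t)
    (hsne : s.Nonempty) (htne : t.Nonempty) :
    hausdorffEDist (f '' s) (f '' t) ≤ c * hausdorffEDist s t := by
  apply hausdorffEdist_le_of_mem_edist
  · rintro _ ⟨x, hx, rfl⟩
    obtain ⟨y, hy, hyeq⟩ := ht.exists_infEdist_eq_edist htne x
    refine ⟨f y, mem_image_of_mem f hy, ?_⟩
    calc edist (f x) (f y) ≤ c * edist x y := hf x y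
      _ = c * infEDist x t := by rw [hyeq]
      _ ≤ c * hausdorffEDist s t :=
        mul_le_mul_right (infEdist_le_hausdorffEdist_of_mem hx) _
  · rintro _ ⟨y, hy, rfl⟩
    obtain ⟨x, hx, hxeq⟩ := hs.exists_infEdist_eq_edist hsne y
    refine ⟨f x, mem_image_of_mem f hx, ?_⟩
    calc edist (f y) (f x) ≤ c * edist y x := hf y x
      _ = c * infEDist y s := by rw [hxeq]
      _ ≤ c * hausdorffEDist s t := by
        rw [hausdorffEDist_comm]
        exact mul_le_mul_right (infEdist_le_hausdorffEdist_of_mem hy) _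

/-- Hausdorff edistance between unions is bounded by the sup of the edistances. -/
lemma hausdorffEdist_iUnion_le {T : Type} [MetricSpace T] {n : ℕ}
    (s t : Fin n → Set T) :
    hausdorffEDist (⋃ i, s i) (⋃ i, t i) ≤ ⨆ i, hausdorffEDist (s i) (t i) := by
  apply hausdorffEdist_le_of_infEdist
  · rintro x hx
    obtain ⟨i, hxi⟩ := mem_iUnion.1 hx
    calc infEDist x (⋃ i, t i) ≤ infEDist x (t i) := infEdist_anti (subset_iUnion t i)
      _ ≤ hausdorffEDist (s i) (t i) := infEdist_le_hausdorffEdist_of_mem hxi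
      _ ≤ ⨆ i, hausdorffEDist (s i) (t i) := le_iSup (fun i => hausdorffEDist (s i) (t i)) i
  · rintro y hy
    obtain ⟨i, hyi⟩ := mem_iUnion.1 hy
    calc infEDist y (⋃ i, s i) ≤ infEDist y (s i) := infEdist_anti (subset_iUnion s i)
      _ ≤ hausdorffEDist (s i) (t i) := by
          rw [hausdorffEDist_comm]
          exact infEdist_le_hausdorffEdist_of_mem hyi
      _ ≤ ⨆ i, hausdorffEDist (s i) (t i) := le_iSup (fun i => hausdorffEDist (s i) (t i)) i

/-- Hutchinson's theorem: an iterated function system of contractions on a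
complete metric space has a unique nonempty compact invariant set. -/
theorem ifs_unique_invariant_set
    {T : Type} [MetricSpace T] [CompleteSpace T] [Nonempty T]
    (n : ℕ) (hn : 0 < n) (φ : Fin n → T → T)
    (c : ℝ) (hc0 : 0 < c) (hc1 : c < 1)
    (hcontr : ∀ i, ∀ x y : T, dist (φ i x) (φ i y) ≤ c * dist x y) :
    ∃! K : Set T, K.Nonempty ∧ IsCompact K ∧ K = ⋃ i : Fin n, φ i '' K := by
  haveI : Nonempty (Fin n) := Fin.pos_iff_nonempty.1 hn
  haveI : Nonempty (NonemptyCompacts T) :=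
    ⟨⟨⟨{Classical.arbitrary T}, isCompact_singleton⟩, Set.singleton_nonempty _⟩⟩
  set cnn : NNReal := ⟨c, hc0.le⟩ with hcnn
  have hlip : ∀ i, LipschitzWith cnn (φ i) := fun i =>
    LipschitzWith.of_dist_le_mul (fun x y => hcontr i x y)
  -- the Hutchinson operator on nonempty compact sets
  set F : NonemptyCompacts T → NonemptyCompacts T := fun K =>
    ⟨⟨⋃ i, φ i '' (K : Set T), isCompact_iUnion fun i =>
        K.isCompact.image (hlip i).continuous⟩,
      let ⟨x, hx⟩ := K.nonempty
      ⟨φ (Classical.arbitrary (Fin n)) x, mem_iUnion.2 ⟨_, mem_image_of_mem _ hx⟩⟩⟩ with hF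
  have hFcontr : ContractingWith cnn F := by
    constructor
    · exact_mod_cast hc1
    · intro K L
      show hausdorffEdist (⋃ i, φ i '' (K : Set T)) (⋃ i, φ i '' (L : Set T)) ≤
        cnn * hausdorffEdist (K : Set T) (L : Set T)
      refine (hausdorffEdist_iUnion_le _ _).trans (iSup_le fun i => ?_)
      exact hausdorffEdist_image_le (hlip i) _ _ K.isCompact L.isCompact
        K.nonempty L.nonempty
  set A : NonemptyCompacts T := ContractingWith.fixedPoint F hFcontr with hA
  have hfix : IsFixedPt F A := hFcontr.fixedPoint_isFixedPt
  refine ⟨(A : Set T), ⟨A.nonempty, A.isCompact, ?_⟩, ?_⟩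
  · conv_lhs => rw [← hfix]
    rfl
  · rintro K ⟨hKne, hKc, hKeq⟩
    have : IsFixedPt F (⟨⟨K, hKc⟩, hKne⟩ : NonemptyCompacts T) := by
      apply NonemptyCompacts.ext
      exact hKeq.symm
    have := hFcontr.fixedPoint_unique' this hfix
    exact congrArg (fun s : NonemptyCompacts T => (s : Set T)) this
end

section
/- For any point y ∈ K_{v₀} and any open neighborhood U of y in K_{v₀}, there exist n ∈ ℕ and a finite path w of length n with s(w) = v₀ such that y ∈ φ_w(K_{r(w)}) ⊆ U. -/
lemma mw_aux
    {V E X : Type} [MetricSpace X]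
    (r s : E → V)
    (K : V → Set X)
    (φ : E → X → X)
    (hmap : ∀ e, ∀ x ∈ K (r e), φ e x ∈ K (s e))
    (c : ℝ) (hc : 0 ≤ c)
    (hlip : ∀ e, ∀ x ∈ K (r e), ∀ y ∈ K (r e), dist (φ e x) (φ e y) ≤ c * dist x y)
    (hinv : ∀ v, K v = ⋃ e ∈ {e : E | s e = v}, φ e '' K (r e))
    (D : ℝ) (hD : ∀ v, ∀ x ∈ K v, ∀ y ∈ K v, dist x y ≤ D) :
    ∀ n : ℕ, ∀ v : V, ∀ y ∈ K v, ∃ w : List E, ∃ hw : w ≠ [],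
      w.Chain' (fun a b => r a = s b) ∧ s (w.head hw) = v ∧
      y ∈ (fun x => w.foldr φ x) '' K (r (w.getLast hw)) ∧
      (fun x => w.foldr φ x) '' K (r (w.getLast hw)) ⊆ K v ∧
      (∀ a ∈ (fun x => w.foldr φ x) '' K (r (w.getLast hw)),
        ∀ b ∈ (fun x => w.foldr φ x) '' K (r (w.getLast hw)),
        dist a b ≤ c ^ (n + 1) * D) := by
  intro n
  induction n with
  | zero =>
    intro v y hy
    rw [hinv v] at hy
    simp only [Set.mem_iUnion, Set.mem_setOf_eq] at hy
    obtain ⟨e, he, x, hx, hxy⟩ := hy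
    refine ⟨[e], by simp, List.isChain_singleton _, by simpa using he, ?_, ?_, ?_⟩
    · exact ⟨x, by simpa using hx, by simpa using hxy⟩
    · rintro a ⟨z, hz, rfl⟩
      simp only [List.foldr_cons, List.foldr_nil]
      rw [← he]
      exact hmap e z (by simpa using hz)
    · rintro a ⟨z, hz, rfl⟩ b ⟨z', hz', rfl⟩
      simp only [List.foldr_cons, List.foldr_nil, pow_one]
      simp only [List.getLast_singleton] at hz hz'
      calc dist (φ e z) (φ e z') ≤ c * dist z z' := hlip e z hz z' hz'
        _ ≤ c ^ 1 * D := by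
            rw [pow_one]
            exact mul_le_mul_of_nonneg_left (hD (r e) z hz z' hz') hc
  | succ n ih =>
    intro v y hy
    rw [hinv v] at hy
    simp only [Set.mem_iUnion, Set.mem_setOf_eq] at hy
    obtain ⟨e, he, x, hx, hxy⟩ := hy
    obtain ⟨w, hw, hchain, hhead, hxmem, hsub, hdist⟩ := ih (r e) x hx
    refine ⟨e :: w, by simp, ?_, by simpa using he, ?_, ?_, ?_⟩
    · refine List.isChain_cons.mpr ?_
      refine ⟨?_, hchain⟩
      intro b hb
      rw [List.head?_eq_head hw] at hb
      cases hb
      exact hhead.symm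
    · obtain ⟨z, hz, hzx⟩ := hxmem
      refine ⟨z, ?_, ?_⟩
      · rwa [List.getLast_cons hw]
      · simp only [List.foldr_cons]
        rw [show w.foldr φ z = x from hzx, hxy]
    · rintro a ⟨z, hz, rfl⟩
      rw [List.getLast_cons hw] at hz
      simp only [List.foldr_cons]
      have : w.foldr φ z ∈ K (r e) := hsub ⟨z, hz, rfl⟩
      rw [← he]
      exact hmap e _ this
    · rintro a ⟨z, hz, rfl⟩ b ⟨z', hz', rfl⟩
      rw [List.getLast_cons hw] at hz hz'
      simp only [List.foldr_cons]
      have h1 : w.foldr φ z ∈ K (r e) := hsub ⟨z, hz, rfl⟩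
      have h2 : w.foldr φ z' ∈ K (r e) := hsub ⟨z', hz', rfl⟩
      calc dist (φ e (w.foldr φ z)) (φ e (w.foldr φ z'))
          ≤ c * dist (w.foldr φ z) (w.foldr φ z') := hlip e _ h1 _ h2
        _ ≤ c * (c ^ (n + 1) * D) := mul_le_mul_of_nonneg_left
              (hdist _ ⟨z, hz, rfl⟩ _ ⟨z', hz', rfl⟩) hc
        _ = c ^ (n + 1 + 1) * D := by ring

/-- for any y ∈ K_{v₀} and any relatively open neighborhood U of y in
K_{v₀}, there is a finite path w starting at v₀ with y ∈ φ_w(K_{r(w)}) ⊆ U. -/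
theorem exists_path_image_in_neighborhood
    {V E X : Type} [Fintype V] [Fintype E] [MetricSpace X]
    (r s : E → V)
    (K : V → Set X) (hKc : ∀ v, IsCompact (K v)) (hKne : ∀ v, (K v).Nonempty)
    (φ : E → X → X)
    (hmap : ∀ e, ∀ x ∈ K (r e), φ e x ∈ K (s e))
    (c : ℝ) (hc0 : 0 < c) (hc1 : c < 1)
    (hlip : ∀ e, ∀ x ∈ K (r e), ∀ y ∈ K (r e), dist (φ e x) (φ e y) ≤ c * dist x y)
    (hinv : ∀ v, K v = ⋃ e ∈ {e : E | s e = v}, φ e '' K (r e))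
    (v₀ : V) (y : X) (hy : y ∈ K v₀)
    (U O : Set X) (hO : IsOpen O) (hUO : U = O ∩ K v₀) (hyU : y ∈ U) :
    ∃ w : List E, ∃ hw : w ≠ [],
      w.Chain' (fun a b => r a = s b) ∧ s (w.head hw) = v₀ ∧
      y ∈ (fun x => w.foldr φ x) '' K (r (w.getLast hw)) ∧
      (fun x => w.foldr φ x) '' K (r (w.getLast hw)) ⊆ U := by
  -- bound on diameters
  have hbd : ∀ v : V, ∃ Dv : ℝ, ∀ x ∈ K v, ∀ y ∈ K v, dist x y ≤ Dv := by
    intro v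
    obtain ⟨C, hC⟩ := Metric.isBounded_iff.mp (hKc v).isBounded
    exact ⟨C, fun x hx y hy => hC hx hy⟩
  choose Df hDf using hbd
  obtain ⟨D₀, hD₀⟩ := Finite.exists_le Df
  set D : ℝ := max D₀ 1 with hDdef
  have hD : ∀ v, ∀ x ∈ K v, ∀ y ∈ K v, dist x y ≤ D := fun v x hx y hy =>
    (hDf v x hx y hy).trans ((hD₀ v).trans (le_max_left _ _))
  have hDpos : 0 < D := lt_of_lt_of_le one_pos (le_max_right _ _)
  -- find ε
  have hyO : y ∈ O := (hUO ▸ hyU).1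
  obtain ⟨ε, hε, hball⟩ := Metric.isOpen_iff.mp hO y hyO
  -- find n with c^(n+1) * D < ε
  obtain ⟨n, hn⟩ := exists_pow_lt_of_lt_one (div_pos hε hDpos) hc1
  have hnD : c ^ (n + 1) * D < ε := by
    have h1 : c ^ (n + 1) ≤ c ^ n := pow_le_pow_of_le_one hc0.le hc1.le (by omega)
    have : c ^ (n + 1) < ε / D := lt_of_le_of_lt h1 hn
    calc c ^ (n + 1) * D < (ε / D) * D := by
          exact mul_lt_mul_of_pos_right this hDpos
      _ = ε := by field_simp
  obtain ⟨w, hw, hchain, hhead, hmem, hsub, hdist⟩ :=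
    mw_aux r s K φ hmap c hc0.le hlip hinv D hD n v₀ y hy
  refine ⟨w, hw, hchain, hhead, hmem, ?_⟩
  intro a ha
  rw [hUO]
  refine ⟨hball ?_, hsub ha⟩
  have := hdist a ha y hmem
  exact Metric.mem_ball.mpr (lt_of_le_of_lt this hnD)
end

section
/- If a Mauldin-Williams graph satisfies the open set condition in K, then the set V = ⋃_{v∈E⁰} V_v is an open dense subset of K. -/
/-- under the open set condition in K, the union V = ⋃_v V_v is an open
dense subset of the invariant set K = ⋃_v K_v. -/
theorem open_set_condition_union_open_dense
    {V E X : Type} [Fintype V] [Fintype E] [MetricSpace X]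
    (r s : E → V)
    (K : V → Set X) (hKc : ∀ v, IsCompact (K v)) (hKne : ∀ v, (K v).Nonempty)
    (hKdisj : ∀ v w, v ≠ w → Disjoint (K v) (K w))
    (φ : E → X → X)
    (hmap : ∀ e, ∀ x ∈ K (r e), φ e x ∈ K (s e))
    (c : ℝ) (hc0 : 0 < c) (hc1 : c < 1)
    (hlip : ∀ e, ∀ x ∈ K (r e), ∀ y ∈ K (r e), dist (φ e x) (φ e y) ≤ c * dist x y)
    (hinv : ∀ v, K v = ⋃ e ∈ {e : E | s e = v}, φ e '' K (r e))
    -- the open set condition in K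
    (W : V → Set X) (hWne : ∀ v, (W v).Nonempty) (hWK : ∀ v, W v ⊆ K v)
    (hWopen : ∀ v, ∃ O : Set X, IsOpen O ∧ W v = O ∩ K v)
    (hWinv : ∀ v, (⋃ e ∈ {e : E | s e = v}, φ e '' W (r e)) ⊆ W v)
    (hWdisj : ∀ e f : E, e ≠ f → Disjoint (φ e '' W (r e)) (φ f '' W (r f))) :
    (∃ O : Set X, IsOpen O ∧ (⋃ v, W v) = O ∩ ⋃ v, K v) ∧
    (⋃ v, K v) ⊆ closure (⋃ v, W v) := by
  constructor
  · -- openness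
    choose O hOopen hOW using hWopen
    -- U v : open set separating K v from the other K w
    set U : V → Set X := fun v => (⋃ w ∈ ({v}ᶜ : Set V), K w)ᶜ with hU
    have hUopen : ∀ v, IsOpen (U v) := by
      intro v
      apply isOpen_compl_iff.mpr
      apply Set.Finite.isClosed_biUnion (Set.toFinite _)
      intro w _
      exact (hKc w).isClosed
    have hKU : ∀ v, K v ⊆ U v := by
      intro v x hx hx'
      simp only [Set.mem_iUnion] at hx'
      obtain ⟨w, hw, hxw⟩ := hx'
      exact (hKdisj v w (fun h => hw (by simp [h.symm])) ).le_bot ⟨hx, hxw⟩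
    refine ⟨⋃ v, O v ∩ U v, isOpen_iUnion fun v => (hOopen v).inter (hUopen v), ?_⟩
    ext x
    simp only [Set.mem_iUnion, Set.mem_inter_iff]
    constructor
    · rintro ⟨v, hx⟩
      refine ⟨⟨v, ?_, ?_⟩, ⟨v, hWK v hx⟩⟩
      · exact ((hOW v) ▸ hx).1
      · exact hKU v (hWK v hx)
    · rintro ⟨⟨v, hxO, hxU⟩, ⟨w, hxK⟩⟩
      have hvw : w = v := by
        by_contra h
        exact hxU (Set.mem_biUnion (by simpa using h) hxK)
      refine ⟨v, (hOW v) ▸ ⟨hxO, hvw ▸ hxK⟩⟩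
  · -- density
    rcases isEmpty_or_nonempty V with hV | hV
    · simp
    -- uniform diameter bound
    set D : ℝ := ⨆ v, Metric.diam (K v) with hD
    have hDle : ∀ v, Metric.diam (K v) ≤ D :=
      fun v => le_ciSup (Set.Finite.bddAbove (Set.finite_range (fun v => Metric.diam (K v)))) v
    have key : ∀ n : ℕ, ∀ v, ∀ x ∈ K v, ∃ y ∈ W v, dist x y ≤ c ^ n * D := by
      intro n
      induction n with
      | zero =>
        intro v x hx
        obtain ⟨y, hy⟩ := hWne v
        refine ⟨y, hy, ?_⟩
        rw [pow_zero, one_mul]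
        exact le_trans (Metric.dist_le_diam_of_mem (hKc v).isBounded hx (hWK v hy)) (hDle v)
      | succ n ih =>
        intro v x hx
        rw [hinv v] at hx
        simp only [Set.mem_iUnion, Set.mem_image, Set.mem_setOf_eq] at hx
        obtain ⟨e, hse, z, hz, hφz⟩ := hx
        obtain ⟨y, hyW, hyd⟩ := ih (r e) z hz
        refine ⟨φ e y, hWinv v (Set.mem_biUnion hse ⟨y, hyW, rfl⟩), ?_⟩
        calc dist x (φ e y) = dist (φ e z) (φ e y) := by rw [hφz]
          _ ≤ c * dist z y := hlip e z hz y (hWK _ hyW)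
          _ ≤ c * (c ^ n * D) := by
              exact mul_le_mul_of_nonneg_left hyd hc0.le
          _ = c ^ (n + 1) * D := by ring
    intro x hx
    simp only [Set.mem_iUnion] at hx
    obtain ⟨v, hxv⟩ := hx
    rw [Metric.mem_closure_iff]
    intro ε hε
    have htend : Filter.Tendsto (fun n : ℕ => c ^ n * D) Filter.atTop (nhds 0) := by
      simpa using (tendsto_pow_atTop_nhds_zero_of_lt_one hc0.le hc1).mul_const D
    obtain ⟨n, hn⟩ := (htend.eventually (eventually_lt_nhds hε)).exists
    obtain ⟨y, hyW, hyd⟩ := key n v x hxv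
    exact ⟨y, Set.mem_iUnion.mpr ⟨v, hyW⟩, lt_of_le_of_lt hyd hn⟩
end

section
/- The function ξ₀ on 𝒢 defined by ξ₀(x,y) = 1/√(#{e ∈ E¹ : y ∈ K_{r(e)}}) is continuous and satisfies ⟨ξ₀, ξ₀⟩_A = 1, i.e., Σ_{e: y∈K_{r(e)}} |ξ₀(φ_e(y),y)|² = 1 for every y ∈ K; consequently the inner product module ⟨X, X⟩_A contains the identity of A = C(K), so X is full. -/
open scoped Classical

/-- the function ξ₀(x,y) = 1/√#{e : y ∈ K_{r(e)}} on 𝒢 is continuous and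
satisfies ⟨ξ₀,ξ₀⟩_A(y) = 1 for all y ∈ K; hence ⟨X,X⟩_A contains the identity of
A = C(K) and X is full. -/
theorem xi_zero_continuous_and_inner_one
    {V E X : Type} [Fintype V] [Fintype E] [MetricSpace X]
    (r s : E → V)
    (K : V → Set X) (hKc : ∀ v, IsCompact (K v)) (hKne : ∀ v, (K v).Nonempty)
    (hKdisj : ∀ v w, v ≠ w → Disjoint (K v) (K w))
    (φ : E → X → X)
    (hmap : ∀ e, ∀ x ∈ K (r e), φ e x ∈ K (s e))
    (hφcont : ∀ e, ContinuousOn (φ e) (K (r e)))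
    (hnosource : ∀ y ∈ ⋃ v, K v, ∃ e, y ∈ K (r e))
    (ξ₀ : {p : X × X | ∃ e : E, ∃ x ∈ K (r e), p = (φ e x, x)} → ℂ)
    (hξ₀ : ∀ p : {p : X × X | ∃ e : E, ∃ x ∈ K (r e), p = (φ e x, x)},
      ξ₀ p = 1 / Real.sqrt (Fintype.card {e : E // (p : X × X).2 ∈ K (r e)})) :
    Continuous ξ₀ ∧
    ∀ y ∈ ⋃ v, K v,
      (∑ e : E, if h : y ∈ K (r e)
        then ‖ξ₀ ⟨(φ e y, y), ⟨e, y, h, rfl⟩⟩‖ ^ 2 else 0) = 1 := by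
  -- key: if y ∈ K v then y ∈ K (r e) ↔ r e = v
  have key : ∀ v : V, ∀ y ∈ K v, ∀ e : E, (y ∈ K (r e) ↔ r e = v) := by
    intro v y hy e
    constructor
    · intro h
      by_contra hne
      exact Set.disjoint_left.mp (hKdisj _ _ hne) h hy
    · intro h; rw [h]; exact hy
  have cardeq : ∀ v : V, ∀ y ∈ K v,
      Fintype.card {e : E // y ∈ K (r e)} = Fintype.card {e : E // r e = v} := by
    intro v y hy
    exact Fintype.card_congr (Equiv.subtypeEquivRight (fun e => key v y hy e))
  constructor
  · -- continuity: ξ₀ factors through a locally constant ℕ-valued map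
    have hlc : IsLocallyConstant
        (fun p : {p : X × X | ∃ e : E, ∃ x ∈ K (r e), p = (φ e x, x)} =>
          Fintype.card {e : E // (p : X × X).2 ∈ K (r e)}) := by
      rw [IsLocallyConstant.iff_exists_open]
      rintro ⟨p, hp⟩
      obtain ⟨e₀, x₀, hx₀, rfl⟩ := hp
      set v := r e₀ with hv
      have hU : IsOpen {x : X | ∀ w, w ≠ v → x ∉ K w} := by
        have heq : {x : X | ∀ w, w ≠ v → x ∉ K w}
            = ⋂ w, {x : X | w ≠ v → x ∉ K w} := by
          ext x; simp [Set.mem_iInter]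
        rw [heq]
        refine isOpen_iInter_of_finite fun w => ?_
        by_cases hw : w = v
        · simp [hw]
        · have : {x : X | w ≠ v → x ∉ K w} = (K w)ᶜ := by
            ext x; simp [hw]
          rw [this]; exact (hKc w).isClosed.isOpen_compl
      refine ⟨(fun q : {p : X × X | ∃ e : E, ∃ x ∈ K (r e), p = (φ e x, x)} =>
          (q : X × X).2) ⁻¹' {x : X | ∀ w, w ≠ v → x ∉ K w},
        hU.preimage (continuous_snd.comp continuous_subtype_val), ?_, ?_⟩
      · intro w hw
        exact fun hmem => Set.disjoint_left.mp (hKdisj _ _ hw) hmem hx₀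
      · rintro ⟨q, hq⟩ hqU
        obtain ⟨e₁, x₁, hx₁, rfl⟩ := hq
        simp only [Set.mem_preimage, Set.mem_setOf_eq] at hqU
        have hre₁ : r e₁ = v := by
          by_contra hne
          exact hqU _ hne hx₁
        have hx₁v : x₁ ∈ K v := hre₁ ▸ hx₁
        simp only
        rw [cardeq v x₁ hx₁v, cardeq v x₀ hx₀]
    have : ξ₀ = (fun n : ℕ => (1 : ℂ) / (Real.sqrt n : ℂ)) ∘
        (fun p : {p : X × X | ∃ e : E, ∃ x ∈ K (r e), p = (φ e x, x)} =>
          Fintype.card {e : E // (p : X × X).2 ∈ K (r e)}) := by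
      funext p
      rw [hξ₀ p]
      rfl
    rw [this]
    exact (hlc.comp _).continuous
  · intro y hy
    obtain ⟨e₀, he₀⟩ := hnosource y hy
    set n := Fintype.card {e : E // y ∈ K (r e)} with hn
    have hnpos : 0 < n := Fintype.card_pos_iff.mpr ⟨⟨e₀, he₀⟩⟩
    have hval : ∀ e : E, ∀ h : y ∈ K (r e),
        ‖ξ₀ ⟨(φ e y, y), ⟨e, y, h, rfl⟩⟩‖ ^ 2 = 1 / (n : ℝ) := by
      intro e h
      rw [hξ₀]
      simp only
      rw [← hn]
      have h1 : ‖(1 : ℂ) / (Real.sqrt n : ℂ)‖ = 1 / Real.sqrt n := by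
        rw [norm_div, norm_one, Complex.norm_real, Real.norm_eq_abs,
          abs_of_nonneg (Real.sqrt_nonneg _)]
      rw [h1, div_pow, one_pow, Real.sq_sqrt (by positivity : (0:ℝ) ≤ (n:ℝ))]
    have hsum : (∑ e : E, if h : y ∈ K (r e)
        then ‖ξ₀ ⟨(φ e y, y), ⟨e, y, h, rfl⟩⟩‖ ^ 2 else 0)
        = ∑ e : E, if y ∈ K (r e) then (1 / (n : ℝ)) else 0 := by
      apply Finset.sum_congr rfl
      intro e _
      by_cases h : y ∈ K (r e)
      · rw [dif_pos h, if_pos h, hval e h]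
      · rw [dif_neg h, if_neg h]
    rw [hsum, ← Finset.sum_filter, Finset.sum_const, nsmul_eq_mul]
    have hcard : (Finset.univ.filter (fun e : E => y ∈ K (r e))).card = n := by
      rw [hn, Fintype.card_subtype]
    rw [hcard, mul_one_div, div_self]
    exact_mod_cast hnpos.ne'
end

section
/- The left action Φ : A → 𝓛(X), (Φ(a)ξ)(x,y) = a(x)ξ(x,y), is injective: if a ∈ C(K) is nonzero, then there exists ξ ∈ X = C(𝒢) with Φ(a)ξ ≠ 0. -/
/-- the left action Φ : A → 𝓛(X), (Φ(a)ξ)(x,y) = a(x)ξ(x,y), is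
injective: every nonzero a ∈ C(K) admits ξ ∈ X = C(𝒢) with Φ(a)ξ ≠ 0. -/
theorem left_action_faithful
    {V E X : Type} [Fintype V] [Fintype E] [MetricSpace X]
    (r s : E → V)
    (K : V → Set X) (hKc : ∀ v, IsCompact (K v)) (hKne : ∀ v, (K v).Nonempty)
    (φ : E → X → X)
    (hmap : ∀ e, ∀ x ∈ K (r e), φ e x ∈ K (s e))
    (hinv : ∀ v, K v = ⋃ e ∈ {e : E | s e = v}, φ e '' K (r e))
    (hGfst : ∀ p ∈ {p : X × X | ∃ e : E, ∃ x ∈ K (r e), p = (φ e x, x)},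
      p.1 ∈ ⋃ v, K v)
    (a : C((⋃ v, K v : Set X), ℂ)) (ha : a ≠ 0) :
    ∃ ξ : C({p : X × X | ∃ e : E, ∃ x ∈ K (r e), p = (φ e x, x)}, ℂ),
      ∃ p : {p : X × X | ∃ e : E, ∃ x ∈ K (r e), p = (φ e x, x)},
        a ⟨(p : X × X).1, hGfst p p.2⟩ * ξ p ≠ 0 := by
  -- find a point where a is nonzero
  obtain ⟨z, hz⟩ : ∃ z, a z ≠ 0 := by
    by_contra h
    push_neg at h
    exact ha (ContinuousMap.ext fun z => h z)
  obtain ⟨z, hzmem⟩ := z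
  -- z ∈ K v for some v
  obtain ⟨_, ⟨v, rfl⟩, hzv⟩ := hzmem
  -- by hinv, z = φ e y with y ∈ K (r e)
  change z ∈ K v at hzv
  rw [hinv v] at hzv
  obtain ⟨_, ⟨e, rfl⟩, _, ⟨he, rfl⟩, y, hy, hyz⟩ := hzv
  refine ⟨1, ⟨(φ e y, y), ⟨e, y, hy, rfl⟩⟩, ?_⟩
  simp only [ContinuousMap.one_apply, mul_one]
  convert hz using 2
  exact Subtype.ext hyz
end

section
/- If x ∈ K \ B(𝓜), then there exists an open neighborhood U_x of x in K such that: (1) U_x ∩ B(𝓜) = ∅; (2) for every e ∈ I(x) and every f ≠ e with r(f) = r(e), φ_f(φ_e⁻¹(U_x)) ∩ U_x = ∅; and (3) for every e ∉ I(x), U_x ∩ φ_e(K_{r(e)}) = ∅. -/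
open Set Metric Filter

/-- Inverse continuity on a compact set: if `g` is injective on compact `C`,
then points mapping close to `g y` are close to `y`. -/
lemma aux_inv_cont {X : Type} [MetricSpace X] {C : Set X} (hC : IsCompact C)
    {g : X → X} (hgc : ContinuousOn g C) (hg : Set.InjOn g C) {y : X} (hy : y ∈ C)
    {δ : ℝ} (hδ : 0 < δ) :
    ∃ ε > 0, ∀ z ∈ C, dist (g z) (g y) < ε → dist z y < δ := by
  set C' : Set X := C ∩ {z | δ ≤ dist z y} with hC'
  have hC'c : IsCompact C' := by
    apply hC.of_isClosed_subset ?_ inter_subset_left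
    exact hC.isClosed.inter (isClosed_le continuous_const (continuous_id.dist continuous_const))
  have hT : IsClosed (g '' C') :=
    (hC'c.image_of_continuousOn (hgc.mono inter_subset_left)).isClosed
  have hgy : g y ∉ g '' C' := by
    rintro ⟨z, ⟨hzC, hzd⟩, hz⟩
    have : z = y := hg hzC hy hz
    rw [this] at hzd
    simp only [mem_setOf_eq, dist_self] at hzd
    linarith
  obtain ⟨ε, hε, hball⟩ := Metric.isOpen_iff.1 hT.isOpen_compl (g y) hgy
  refine ⟨ε, hε, fun z hz hd => ?_⟩
  by_contra hcon
  push_neg at hcon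
  exact hball hd ⟨z, ⟨hz, hcon⟩, rfl⟩

lemma aux_ev {P : ℝ → Prop} {ε₁ : ℝ} (h1 : 0 < ε₁) (h : ∀ ε, 0 < ε → ε ≤ ε₁ → P ε) :
    ∀ᶠ ε in nhdsWithin 0 (Set.Ioi 0), P ε := by
  filter_upwards [eventually_mem_nhdsWithin,
    (eventually_le_nhds h1).filter_mono nhdsWithin_le_nhds] with ε hε hε1
  exact h ε hε hε1

/-- if x ∈ K \ B(𝓜) then there is a relatively open neighborhood U_x of
x in K with U_x ∩ B(𝓜) = ∅, φ_f(φ_e⁻¹(U_x)) ∩ U_x = ∅ for e ∈ I(x), f ≠ e with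
r(f) = r(e), and U_x ∩ φ_e(K_{r(e)}) = ∅ for e ∉ I(x). -/
theorem nonbranch_point_good_neighborhood
    {V E X : Type} [Fintype V] [Fintype E] [MetricSpace X]
    (r s : E → V)
    (K : V → Set X) (hKc : ∀ v, IsCompact (K v)) (hKne : ∀ v, (K v).Nonempty)
    (φ : E → X → X)
    (hmap : ∀ e, ∀ x ∈ K (r e), φ e x ∈ K (s e))
    (hφcont : ∀ e, ContinuousOn (φ e) (K (r e)))
    (hφinj : ∀ e, Set.InjOn (φ e) (K (r e)))
    (hinv : ∀ v, K v = ⋃ e ∈ {e : E | s e = v}, φ e '' K (r e))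
    (x : X) (hxK : x ∈ ⋃ v, K v)
    (hxB : x ∉ {z : X | ∃ e f : E, e ≠ f ∧ ∃ y, y ∈ K (r e) ∧ y ∈ K (r f) ∧
      φ e y = z ∧ φ f y = z}) :
    ∃ U O : Set X, IsOpen O ∧ U = O ∩ ⋃ v, K v ∧ x ∈ U ∧
      (U ∩ {z : X | ∃ e f : E, e ≠ f ∧ ∃ y, y ∈ K (r e) ∧ y ∈ K (r f) ∧
        φ e y = z ∧ φ f y = z} = ∅) ∧
      (∀ e ∈ {e : E | ∃ y ∈ K (r e), φ e y = x}, ∀ f : E, f ≠ e → r f = r e →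
        φ f '' (K (r e) ∩ φ e ⁻¹' U) ∩ U = ∅) ∧
      (∀ e : E, e ∉ {e : E | ∃ y ∈ K (r e), φ e y = x} →
        U ∩ φ e '' K (r e) = ∅) := by
  classical
  set B : Set X := {z : X | ∃ e f : E, e ≠ f ∧ ∃ y, y ∈ K (r e) ∧ y ∈ K (r f) ∧
      φ e y = z ∧ φ f y = z} with hBdef
  -- B is closed
  have hBclosed : IsClosed B := by
    have hBeq : B = ⋃ e : E, ⋃ f : E,
        {z : X | e ≠ f ∧ ∃ y, y ∈ K (r e) ∧ y ∈ K (r f) ∧ φ e y = z ∧ φ f y = z} := by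
      ext z
      simp only [hBdef, mem_setOf_eq, mem_iUnion]
    rw [hBeq]
    refine isClosed_iUnion_of_finite fun e => isClosed_iUnion_of_finite fun f => ?_
    by_cases hef : e = f
    · simp [hef]
    · have hSeq : {z : X | e ≠ f ∧ ∃ y, y ∈ K (r e) ∧ y ∈ K (r f) ∧ φ e y = z ∧ φ f y = z}
          = φ e '' ((K (r e) ∩ K (r f)) ∩ (fun y => (φ e y, φ f y)) ⁻¹' (Set.diagonal X)) := by
        ext z
        constructor
        · rintro ⟨-, y, h1, h2, h3, h4⟩
          exact ⟨y, ⟨⟨h1, h2⟩, by simp [Set.mem_diagonal_iff, h3, h4]⟩, h3⟩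
        · rintro ⟨y, ⟨⟨h1, h2⟩, hd⟩, rfl⟩
          simp only [Set.mem_preimage, Set.mem_diagonal_iff] at hd
          exact ⟨hef, y, h1, h2, rfl, hd.symm⟩
      rw [hSeq]
      have hD : IsCompact ((K (r e) ∩ K (r f)) ∩ (fun y => (φ e y, φ f y)) ⁻¹' (Set.diagonal X)) := by
        apply (hKc (r e)).of_isClosed_subset ?_ (inter_subset_left.trans inter_subset_left)
        apply ContinuousOn.preimage_isClosed_of_isClosed
        · exact ((hφcont e).mono inter_subset_left).prodMk ((hφcont f).mono inter_subset_right)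
        · exact ((hKc _).inter (hKc _)).isClosed
        · exact isClosed_diagonal
      exact (hD.image_of_continuousOn
        ((hφcont e).mono (inter_subset_left.trans inter_subset_left))).isClosed
  -- the three eventual conditions
  have ev1 : ∀ᶠ ε in nhdsWithin (0:ℝ) (Set.Ioi 0), Metric.ball x ε ∩ B = ∅ := by
    obtain ⟨ε₁, hε₁, hball⟩ := Metric.isOpen_iff.1 hBclosed.isOpen_compl x hxB
    refine aux_ev hε₁ fun ε hε hle => ?_
    apply eq_empty_of_subset_empty
    rintro z ⟨hz1, hz2⟩
    exact hball (lt_of_lt_of_le hz1 hle) hz2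
  have ev2 : ∀ e f : E, ∀ᶠ ε in nhdsWithin (0:ℝ) (Set.Ioi 0),
      (e ∈ {e : E | ∃ y ∈ K (r e), φ e y = x}) → f ≠ e → r f = r e →
      φ f '' (K (r e) ∩ φ e ⁻¹' (Metric.ball x ε)) ∩ Metric.ball x ε = ∅ := by
    intro e f
    by_cases he : e ∈ {e : E | ∃ y ∈ K (r e), φ e y = x}
    · by_cases hf : f ≠ e
      · by_cases hr : r f = r e
        · obtain ⟨y, hyK, hyx⟩ := he
          have hyKf : y ∈ K (r f) := hr ▸ hyK
          have hd : 0 < dist x (φ f y) := by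
            rw [dist_pos]
            intro heq
            exact hxB ⟨e, f, Ne.symm hf, y, hyK, hyKf, hyx, heq.symm⟩
          set d := dist x (φ f y) with hddef
          -- continuity of φ f at y within K (r f)
          obtain ⟨δ, hδ, hδcont⟩ := Metric.continuousWithinAt_iff.1 (hφcont f y hyKf) (d/2)
            (by linarith)
          -- inverse continuity of φ e
          obtain ⟨ε₀, hε₀, hinvc⟩ := aux_inv_cont (hKc (r e)) (hφcont e) (hφinj e) hyK hδ
          refine aux_ev (lt_min hε₀ (by linarith : (0:ℝ) < d/2)) fun ε hε hle _ _ _ => ?_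
          apply eq_empty_of_subset_empty
          rintro w ⟨⟨z, ⟨hzK, hzb⟩, rfl⟩, hwb⟩
          have hzb' : dist (φ e z) (φ e y) < ε₀ := by
            rw [hyx]
            exact lt_of_lt_of_le hzb (hle.trans (min_le_left _ _))
          have hzy : dist z y < δ := hinvc z hzK hzb'
          have h1 : dist (φ f z) (φ f y) < d/2 := hδcont (hr ▸ hzK) hzy
          have h2 : dist (φ f z) x < d/2 :=
            lt_of_lt_of_le hwb (hle.trans (min_le_right _ _))
          have : d ≤ dist x (φ f z) + dist (φ f z) (φ f y) := dist_triangle _ _ _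
          rw [dist_comm x (φ f z)] at this
          linarith
        · exact Filter.Eventually.of_forall fun ε _ _ h => absurd h hr
      · exact Filter.Eventually.of_forall fun ε _ h _ => absurd h hf
    · exact Filter.Eventually.of_forall fun ε h => absurd h he
  have ev3 : ∀ e : E, ∀ᶠ ε in nhdsWithin (0:ℝ) (Set.Ioi 0),
      (e ∉ {e : E | ∃ y ∈ K (r e), φ e y = x}) →
      Metric.ball x ε ∩ φ e '' K (r e) = ∅ := by
    intro e
    by_cases he : e ∈ {e : E | ∃ y ∈ K (r e), φ e y = x}
    · exact Filter.Eventually.of_forall fun ε h => absurd he h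
    · have hx' : x ∉ φ e '' K (r e) := by
        rintro ⟨y, hy, hxy⟩
        exact he ⟨y, hy, hxy⟩
      have himc : IsClosed (φ e '' K (r e)) :=
        ((hKc (r e)).image_of_continuousOn (hφcont e)).isClosed
      obtain ⟨ε₁, hε₁, hball⟩ := Metric.isOpen_iff.1 himc.isOpen_compl x hx'
      refine aux_ev hε₁ fun ε hε hle _ => ?_
      apply eq_empty_of_subset_empty
      rintro z ⟨hz1, hz2⟩
      exact hball (lt_of_lt_of_le hz1 hle) hz2
  -- combine
  have hall : ∀ᶠ ε in nhdsWithin (0:ℝ) (Set.Ioi 0),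
      (Metric.ball x ε ∩ B = ∅) ∧
      (∀ e f : E, (e ∈ {e : E | ∃ y ∈ K (r e), φ e y = x}) → f ≠ e → r f = r e →
        φ f '' (K (r e) ∩ φ e ⁻¹' (Metric.ball x ε)) ∩ Metric.ball x ε = ∅) ∧
      (∀ e : E, (e ∉ {e : E | ∃ y ∈ K (r e), φ e y = x}) →
        Metric.ball x ε ∩ φ e '' K (r e) = ∅) := by
    refine ev1.and (Filter.Eventually.and ?_ ?_)
    · exact Filter.eventually_all.2 fun e => Filter.eventually_all.2 fun f => ev2 e f
    · exact Filter.eventually_all.2 fun e => ev3 e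
  obtain ⟨ε, hεQ, hεpos⟩ := (hall.and eventually_mem_nhdsWithin).exists
  obtain ⟨hQ1, hQ2, hQ3⟩ := hεQ
  have hεpos : (0:ℝ) < ε := hεpos
  refine ⟨Metric.ball x ε ∩ ⋃ v, K v, Metric.ball x ε, Metric.isOpen_ball, rfl,
    ⟨Metric.mem_ball_self hεpos, hxK⟩, ?_, ?_, ?_⟩
  · apply eq_empty_of_subset_empty
    rintro z ⟨⟨hz1, -⟩, hz2⟩
    rw [← hQ1]
    exact ⟨hz1, hz2⟩
  · intro e he f hf hr
    apply eq_empty_of_subset_empty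
    rintro w ⟨⟨z, ⟨hzK, hzb, -⟩, rfl⟩, hwb, -⟩
    rw [← hQ2 e f he hf hr]
    exact ⟨⟨z, ⟨hzK, hzb⟩, rfl⟩, hwb⟩
  · intro e he
    apply eq_empty_of_subset_empty
    rintro z ⟨⟨hz1, -⟩, hz2⟩
    rw [← hQ3 e he]
    exact ⟨hz1, hz2⟩
end

section
/- In the irreducible-graph setting, for any nonzero continuous a ≥ 0 on K attaining its norm at x₀ ∈ K_{v₀}, and any neighborhood U₀ of x₀ in K_{v₀} with a ≥ ‖a‖ − ε on U₀, for every vertex v ∈ E⁰ there exists a finite path α_v starting at v₀ and ending at v such that φ_{α_v}(K_v) ⊆ U₀. -/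
lemma foldr_mem_aux {V E X : Type} (r s : E → V) (K : V → Set X) (φ : E → X → X)
    (hmap : ∀ e, ∀ x ∈ K (r e), φ e x ∈ K (s e)) :
    ∀ (w : List E) (hw : w ≠ []), w.Chain' (fun a b => r a = s b) →
      ∀ x ∈ K (r (w.getLast hw)), w.foldr φ x ∈ K (s (w.head hw)) := by
  intro w
  induction w with
  | nil => intro hw; exact absurd rfl hw
  | cons e t ih =>
    intro _ hch x hx
    cases t with
    | nil => exact hmap e x hx
    | cons e' t' =>
      have h1 : r e = s e' := (List.isChain_cons_cons.mp hch).1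
      have h2 := ih (by simp) (List.isChain_cons_cons.mp hch).2 x
        (by simpa [List.getLast] using hx)
      simp only [List.head_cons] at h2 ⊢
      simp only [List.foldr_cons]
      exact hmap e _ (by rw [h1]; exact h2)

/-- in the irreducible-graph setting, for a nonzero nonnegative
continuous a on K attaining its norm at x₀ ∈ K_{v₀} and a relatively open neighborhood
U₀ of x₀ in K_{v₀} with a ≥ ‖a‖ − ε on U₀, every vertex v admits a finite path α_v from
v₀ to v with φ_{α_v}(K_v) ⊆ U₀. -/
theorem irreducible_exists_path_into_neighborhood
    {V E X : Type} [Fintype V] [Fintype E] [MetricSpace X]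
    (r s : E → V)
    (hirr : ∀ v₁ v₂ : V, ∃ w : List E, ∃ hw : w ≠ [],
      w.Chain' (fun a b => r a = s b) ∧ s (w.head hw) = v₁ ∧ r (w.getLast hw) = v₂)
    (K : V → Set X) (hKc : ∀ v, IsCompact (K v)) (hKne : ∀ v, (K v).Nonempty)
    (φ : E → X → X)
    (hmap : ∀ e, ∀ x ∈ K (r e), φ e x ∈ K (s e))
    -- the shrinking property of the invariant set: small path-images inside any
    -- neighborhood of any point of K_{v₀}
    (hshrink : ∀ v₀ : V, ∀ y ∈ K v₀, ∀ O : Set X, IsOpen O → y ∈ O →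
      ∃ w : List E, ∃ hw : w ≠ [],
        w.Chain' (fun a b => r a = s b) ∧ s (w.head hw) = v₀ ∧
        (fun x => w.foldr φ x) '' K (r (w.getLast hw)) ⊆ O ∩ K v₀)
    (a : X → ℝ) (hacont : Continuous a) (hapos : ∀ x ∈ ⋃ v, K v, 0 ≤ a x)
    (hane : ∃ x ∈ ⋃ v, K v, a x ≠ 0)
    (v₀ : V) (x₀ : X) (hx₀ : x₀ ∈ K v₀)
    (hmax : a x₀ = ⨆ x : (⋃ v, K v : Set X), a x)
    (ε : ℝ) (hε : 0 < ε)
    (U₀ O₀ : Set X) (hO₀ : IsOpen O₀) (hU₀ : U₀ = O₀ ∩ K v₀) (hx₀U : x₀ ∈ U₀)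
    (hlow : ∀ x ∈ U₀, a x₀ - ε ≤ a x) :
    ∀ v : V, ∃ w : List E, ∃ hw : w ≠ [],
      w.Chain' (fun a b => r a = s b) ∧ s (w.head hw) = v₀ ∧ r (w.getLast hw) = v ∧
      (fun x => w.foldr φ x) '' K v ⊆ U₀ := by
  intro v
  have hx₀O : x₀ ∈ O₀ := by rw [hU₀] at hx₀U; exact hx₀U.1
  obtain ⟨w, hw, hch, hhead, himg⟩ := hshrink v₀ x₀ hx₀ O₀ hO₀ hx₀O
  obtain ⟨w', hw', hch', hhead', hlast'⟩ := hirr (r (w.getLast hw)) v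
  have hne : w ++ w' ≠ [] := by simp [hw]
  refine ⟨w ++ w', hne, ?_, ?_, ?_, ?_⟩
  · refine List.IsChain.append hch hch' ?_
    intro x hx y hy
    rw [List.getLast?_eq_getLast (l := w) hw, Option.mem_some_iff] at hx
    rw [List.head?_eq_head hw', Option.mem_some_iff] at hy
    rw [← hx, ← hy]
    exact hhead'.symm
  · rw [List.head_append_left hw]; exact hhead
  · rw [List.getLast_append_right hw']; exact hlast'
  · rintro _ ⟨x, hx, rfl⟩
    have hx' : w'.foldr φ x ∈ K (r (w.getLast hw)) := by
      rw [← hhead']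
      exact foldr_mem_aux r s K φ hmap w' hw' hch' x (by rw [hlast']; exact hx)
    have : w.foldr φ (w'.foldr φ x) ∈ O₀ ∩ K v₀ := himg ⟨w'.foldr φ x, hx', rfl⟩
    rw [hU₀]
    simpa [List.foldr_append] using this
end

section
/- If G is a finite directed graph with no sinks which is irreducible and not a cyclic permutation (i.e., some vertex v* emits two distinct edges e′ ≠ e″), then for every n ∈ ℕ there exists a path (e₁, …, e_n) of length n starting at v* such that e₁ ≠ e_i for all 2 ≤ i ≤ n. -/
/-- in a finite directed graph with no sinks which is irreducible and not
a cyclic permutation (some vertex emits two distinct edges), for every n there is a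
path (e₁,…,e_n) starting at v* with e₁ ≠ e_i for all 2 ≤ i ≤ n. -/
theorem exists_path_first_edge_distinct
    {V E : Type} [Fintype V] [Fintype E]
    (r s : E → V)
    (hnosink : ∀ v : V, ∃ e : E, s e = v)
    (hirr : ∀ v₁ v₂ : V, ∃ w : List E, ∃ hw : w ≠ [],
      w.Chain' (fun a b => r a = s b) ∧ s (w.head hw) = v₁ ∧ r (w.getLast hw) = v₂)
    (vstar : V) (e' e'' : E) (hee : e' ≠ e'')
    (he' : s e' = vstar) (he'' : s e'' = vstar) :
    ∀ n : ℕ, ∀ hn : 0 < n, ∃ w : Fin n → E,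
      s (w ⟨0, by omega⟩) = vstar ∧
      (∀ i : ℕ, ∀ h : i + 1 < n, r (w ⟨i, by omega⟩) = s (w ⟨i + 1, h⟩)) ∧
      (∀ i : Fin n, 0 < (i : ℕ) → w i ≠ w ⟨0, by omega⟩) := by
  intro n hn
  classical
  -- choose a successor edge for each vertex, forcing e' at vstar
  set next : V → E := fun v => if v = vstar then e' else Classical.choose (hnosink v) with hnext
  have hsnext : ∀ v, s (next v) = v := by
    intro v
    by_cases hv : v = vstar
    · simp [hnext, hv, he']
    · simp [hnext, hv, Classical.choose_spec (hnosink v)]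
  have hne : ∀ v, next v ≠ e'' := by
    intro v h
    by_cases hv : v = vstar
    · exact hee (by simpa [hnext, hv] using h)
    · exact hv (by rw [← hsnext v, h, he''])
  -- deterministic walk starting with e''
  let f : ℕ → E := fun k => Nat.rec e'' (fun _ e => next (r e)) k
  have hf0 : f 0 = e'' := rfl
  have hfs : ∀ k, f (k + 1) = next (r (f k)) := fun k => rfl
  refine ⟨fun i => f i, by simpa [hf0] using he'', ?_, ?_⟩
  · intro i h
    simp only [hfs i, hsnext]
  · intro i hi h
    rcases i with ⟨i, hlt⟩
    cases i with
    | zero => exact absurd hi (by simp)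
    | succ k =>
      simp only [hf0] at h
      exact hne (r (f k)) (by simpa [hfs] using h)
end

section
/- If a Mauldin-Williams graph satisfies the graph separation condition, then the map V : C(𝒢) → C(E¹ ×_G K) given by (Vξ)(e,x) = ξ(φ_e(x), x) is a bijective linear map that preserves the A-valued inner products: ⟨Vξ, Vη⟩_A = ⟨ξ, η⟩_A, and intertwines the bimodule actions. -/
open scoped Classical

/-- under the graph separation condition, (Vξ)(e,x) = ξ(φ_e(x),x) defines
a bijective linear map V : C(𝒢) → C(E¹ ×_G K) that preserves the A-valued inner
products and intertwines the bimodule actions. -/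
theorem graph_separation_correspondence_isomorphism
    {V E X : Type} [Fintype V] [Fintype E] [TopologicalSpace E] [DiscreteTopology E] [MetricSpace X]
    (r s : E → V)
    (K : V → Set X) (hKc : ∀ v, IsCompact (K v)) (hKne : ∀ v, (K v).Nonempty)
    (φ : E → X → X)
    (hmap : ∀ e, ∀ x ∈ K (r e), φ e x ∈ K (s e))
    (hφcont : ∀ e, ContinuousOn (φ e) (K (r e)))
    (hinv : ∀ v, K v = ⋃ e ∈ {e : E | s e = v}, φ e '' K (r e))
    -- the graph separation condition: cographs of distinct edges are disjoint
    (hsep : ∀ e f : E, e ≠ f →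
      Disjoint {p : X × X | ∃ x ∈ K (r e), p = (φ e x, x)}
               {p : X × X | ∃ x ∈ K (r f), p = (φ f x, x)}) :
    ∃ Vm : C({p : X × X | ∃ e : E, ∃ x ∈ K (r e), p = (φ e x, x)}, ℂ) →
           C({q : E × X | q.2 ∈ K (r q.1)}, ℂ),
      -- the defining formula (Vξ)(e,x) = ξ(φ_e(x), x)
      (∀ ξ, ∀ e : E, ∀ x : X, ∀ h : x ∈ K (r e),
        Vm ξ ⟨(e, x), h⟩ = ξ ⟨(φ e x, x), ⟨e, x, h, rfl⟩⟩) ∧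
      -- linearity
      (∀ ξ η, Vm (ξ + η) = Vm ξ + Vm η) ∧
      (∀ (z : ℂ) ξ, Vm (z • ξ) = z • Vm ξ) ∧
      -- bijectivity
      Function.Bijective Vm ∧
      -- V preserves the A-valued inner products
      (∀ ξ η, ∀ x ∈ ⋃ v, K v,
        (∑ e : E, if h : x ∈ K (r e)
            then (starRingEnd ℂ) (Vm ξ ⟨(e, x), h⟩) * Vm η ⟨(e, x), h⟩ else 0) =
        ∑ e : E, if h : x ∈ K (r e)
            then (starRingEnd ℂ) (ξ ⟨(φ e x, x), ⟨e, x, h, rfl⟩⟩) *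
              η ⟨(φ e x, x), ⟨e, x, h, rfl⟩⟩ else 0) ∧
      -- V intertwines the bimodule actions
      (∀ (a b : C((⋃ v, K v : Set X), ℂ))
         (ξ ζ : C({p : X × X | ∃ e : E, ∃ x ∈ K (r e), p = (φ e x, x)}, ℂ))
         (η : C({q : E × X | q.2 ∈ K (r q.1)}, ℂ)),
        (∀ (p : {p : X × X | ∃ e : E, ∃ x ∈ K (r e), p = (φ e x, x)})
           (h1 : (p : X × X).1 ∈ ⋃ v, K v) (h2 : (p : X × X).2 ∈ ⋃ v, K v),
          ζ p = a ⟨(p : X × X).1, h1⟩ * ξ p * b ⟨(p : X × X).2, h2⟩) →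
        (∀ (e : E) (x : X) (h : x ∈ K (r e))
           (h1 : φ e x ∈ ⋃ v, K v) (h2 : x ∈ ⋃ v, K v),
          η ⟨(e, x), h⟩ = a ⟨φ e x, h1⟩ * Vm ξ ⟨(e, x), h⟩ * b ⟨x, h2⟩) →
        Vm ζ = η) := by

  classical
  -- the two underlying subtypes
  set Ω : Set (X × X) := {p : X × X | ∃ e : E, ∃ x ∈ K (r e), p = (φ e x, x)} with hΩdef
  set Q : Set (E × X) := {q : E × X | q.2 ∈ K (r q.1)} with hQdef
  -- the canonical map Φ : Q → Ω
  have hΦmem : ∀ q : Q, ((φ (q : E × X).1 (q : E × X).2, (q : E × X).2) : X × X) ∈ Ω :=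
    fun q => ⟨(q : E × X).1, (q : E × X).2, q.2, rfl⟩
  let Φ : Q → Ω := fun q => ⟨(φ (q : E × X).1 (q : E × X).2, (q : E × X).2), hΦmem q⟩
  -- continuity of Φ
  have hΦcont : Continuous Φ := by
    apply Continuous.subtype_mk
    rw [continuous_iff_continuousAt]
    intro q0
    have hU : {q : Q | (q : E × X).1 = (q0 : E × X).1} ∈ nhds q0 := by
      have hop : IsOpen {q : Q | (q : E × X).1 = (q0 : E × X).1} := by
        have heq : {q : Q | (q : E × X).1 = (q0 : E × X).1}
            = (fun q : Q => (q : E × X).1) ⁻¹' {(q0 : E × X).1} := rfl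
        rw [heq]
        exact (continuous_fst.comp continuous_subtype_val).isOpen_preimage _
          (isOpen_discrete _)
      exact hop.mem_nhds rfl
    have hmem : ∀ᶠ q : Q in nhds q0, (q : E × X).2 ∈ K (r (q0 : E × X).1) := by
      filter_upwards [hU] with q hq
      have h2 : (q : E × X).2 ∈ K (r (q : E × X).1) := q.2
      rwa [hq] at h2
    have hm : Filter.Tendsto (fun q : Q => (q : E × X).2) (nhds q0)
        (nhdsWithin (q0 : E × X).2 (K (r (q0 : E × X).1))) := by
      rw [tendsto_nhdsWithin_iff]
      exact ⟨(continuous_snd.comp continuous_subtype_val).continuousAt, hmem⟩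
    have h1 : ContinuousAt (fun q : Q => φ (q0 : E × X).1 (q : E × X).2) q0 :=
      Filter.Tendsto.comp (hφcont (q0 : E × X).1 (q0 : E × X).2 q0.2) hm
    have h2 : ContinuousAt
        (fun q : Q => ((φ (q0 : E × X).1 (q : E × X).2, (q : E × X).2) : X × X)) q0 :=
      h1.prodMk (continuous_snd.comp continuous_subtype_val).continuousAt
    apply h2.congr
    filter_upwards [hU] with q hq
    simp only [hq]
  -- Q is compact
  have hQcomp : IsCompact Q := by
    have hQU : Q = ⋃ e : E, (({e} : Set E) ×ˢ K (r e)) := by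
      ext q
      constructor
      · intro hq
        exact Set.mem_iUnion.2 ⟨q.1, ⟨rfl, hq⟩⟩
      · intro hq
        obtain ⟨e, h1, h2⟩ := Set.mem_iUnion.1 hq
        simp only [Set.mem_singleton_iff] at h1
        show q.2 ∈ K (r q.1)
        rw [h1]
        exact h2
    rw [hQU]
    exact isCompact_iUnion fun e => isCompact_singleton.prod (hKc _)
  haveI : CompactSpace Q := isCompact_iff_compactSpace.mp hQcomp
  -- Φ is bijective
  have hΦinj : Function.Injective Φ := by
    rintro ⟨⟨e, x⟩, hx⟩ ⟨⟨f, y⟩, hy⟩ h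
    simp only [Φ, Subtype.mk.injEq, Prod.mk.injEq] at h
    obtain ⟨h1, h2⟩ := h
    by_cases hef : e = f
    · subst hef; subst h2; rfl
    · exfalso
      have hd := hsep e f hef
      have hmem1 : ((φ e x, x) : X × X) ∈ {p : X × X | ∃ z ∈ K (r e), p = (φ e z, z)} :=
        ⟨x, hx, rfl⟩
      have hmem2 : ((φ e x, x) : X × X) ∈ {p : X × X | ∃ z ∈ K (r f), p = (φ f z, z)} :=
        ⟨y, hy, by rw [h1, h2]⟩
      exact Set.disjoint_left.mp hd hmem1 hmem2
  have hΦsurj : Function.Surjective Φ := by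
    rintro ⟨p, hp⟩
    obtain ⟨e, x, hx, rfl⟩ := hp
    exact ⟨⟨(e, x), hx⟩, rfl⟩
  -- Φ is a homeomorphism
  let eqv : Q ≃ Ω := Equiv.ofBijective Φ ⟨hΦinj, hΦsurj⟩
  have heqvcont : Continuous eqv := hΦcont
  let H : Q ≃ₜ Ω := Continuous.homeoOfEquivCompactToT2 (f := eqv) heqvcont
  -- the map Vm
  refine ⟨fun ξ => ξ.comp ⟨Φ, hΦcont⟩, ?_, ?_, ?_, ?_, ?_, ?_⟩
  · intro ξ e x h
    rfl
  · intro ξ η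
    ext q
    simp
  · intro z ξ
    ext q
    simp
  · refine Function.bijective_iff_has_inverse.mpr
      ⟨fun η => η.comp ⟨fun p => H.symm p, H.symm.continuous⟩, ?_, ?_⟩
    · intro ξ
      ext p
      show ξ (Φ (H.symm p)) = ξ p
      exact congrArg ξ (eqv.apply_symm_apply p)
    · intro η
      ext q
      show η (H.symm (Φ q)) = η q
      exact congrArg η (eqv.symm_apply_apply q)
  · intro ξ η x hx
    rfl
  · intro a b ξ ζ η hζ hη
    ext q
    obtain ⟨⟨e, x⟩, hq⟩ := q
    have hx : x ∈ K (r e) := hq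
    have h1 : φ e x ∈ ⋃ v, K v := Set.mem_iUnion.2 ⟨s e, hmap e x hx⟩
    have h2 : x ∈ ⋃ v, K v := Set.mem_iUnion.2 ⟨r e, hx⟩
    show ζ (Φ ⟨(e, x), hq⟩) = η ⟨(e, x), hq⟩
    rw [hη e x hx h1 h2]
    exact hζ ⟨(φ e x, x), ⟨e, x, hx, rfl⟩⟩ h1 h2
end
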